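/- arXiv:2410.19386 — 2 statements merged into one kernel-verified Lean document; each statement's English description precedes it below -/
import Mathlib

section
/- Soundness of saturation: if δ' ⊇ δ is obtained from δ by finitely many applications of the saturation rule, then every word accepted by the automaton (Q,Σ,δ',q₀,F) lies in pre*(L(A)), where L(A) is the language of the original automaton (Q,Σ,δ,q₀,F). -/
/-- Symbols of a grammar: variables `V` or terminals `T`. -/
abbrev GSym (V T : Type) := V ⊕ T

/-- A context-free grammar: a set of productions and a start variable. -/
structure CFG (V T : Type) where
  P : Set (V × List (GSym V T))
  S : V

/-- One-step derivation: apply a production in an arbitrary context. -/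
def CFG.DStep {V T : Type} (G : CFG V T) (x y : List (GSym V T)) : Prop :=
  ∃ (α γ : List (GSym V T)) (A : V) (β : List (GSym V T)),
    (A, β) ∈ G.P ∧ x = α ++ Sum.inl A :: γ ∧ y = α ++ β ++ γ

/-- `⇒*`: reflexive-transitive closure of one-step derivation. -/
def CFG.Derives {V T : Type} (G : CFG V T) : List (GSym V T) → List (GSym V T) → Prop :=
  Relation.ReflTransGen G.DStep

/-- `pre*(L)`: the set of predecessors of `L`. -/
def CFG.preStar {V T : Type} (G : CFG V T) (L : Set (List (GSym V T))) :
    Set (List (GSym V T)) :=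
  {α | ∃ β ∈ L, G.Derives α β}

/-- Path relation of a nondeterministic automaton given by transitions `δ`. -/
inductive NPath {V T Q : Type} (δ : Set (Q × GSym V T × Q)) : Q → List (GSym V T) → Q → Prop
  | nil (q : Q) : NPath δ q [] q
  | cons {q q'' q' : Q} {a : GSym V T} {w : List (GSym V T)} :
      (q, a, q'') ∈ δ → NPath δ q'' w q' → NPath δ q (a :: w) q'

/-- Language accepted from initial state `q₀` with final states `F`. -/
def NAccepts {V T Q : Type} (δ : Set (Q × GSym V T × Q)) (q₀ : Q) (F : Set Q) :
    Set (List (GSym V T)) :=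
  {w | ∃ qf ∈ F, NPath δ q₀ w qf}

/-- `δ` is closed under the saturation rule for grammar `G`. -/
def SatClosed {V T Q : Type} (G : CFG V T) (δ : Set (Q × GSym V T × Q)) : Prop :=
  ∀ (A : V) (β : List (GSym V T)) (q q' : Q),
    (A, β) ∈ G.P → NPath δ q β q' → (q, Sum.inl A, q') ∈ δ

/-- One application of the saturation rule. -/
def SatStep {V T Q : Type} (G : CFG V T) (δ₁ δ₂ : Set (Q × GSym V T × Q)) : Prop :=
  ∃ (A : V) (β : List (GSym V T)) (q q' : Q),
    (A, β) ∈ G.P ∧ NPath δ₁ q β q' ∧ δ₂ = insert (q, Sum.inl A, q') δ₁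

/-- The saturated transition relation: smallest superset of `δ` closed under
the saturation rule (given as the intersection of all closed supersets). -/
def satClosure {V T Q : Type} (G : CFG V T) (δ : Set (Q × GSym V T × Q)) :
    Set (Q × GSym V T × Q) :=
  ⋂₀ {δ' | δ ⊆ δ' ∧ SatClosed G δ'}

lemma NPath.append {V T Q : Type} {δ : Set (Q × GSym V T × Q)} {q q'' q' : Q}
    {u v : List (GSym V T)} (h1 : NPath δ q u q'') (h2 : NPath δ q'' v q') :
    NPath δ q (u ++ v) q' := by
  induction h1 with
  | nil => exact h2
  | cons ht _ ih => exact NPath.cons ht (ih h2)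

lemma Derives.append_left {V T : Type} {G : CFG V T} {u v : List (GSym V T)}
    (α : List (GSym V T)) (h : G.Derives u v) : G.Derives (α ++ u) (α ++ v) := by
  induction h with
  | refl => exact Relation.ReflTransGen.refl
  | tail _ hs ih =>
    refine ih.tail ?_
    obtain ⟨α', γ, A, β, hP, hx, hy⟩ := hs
    exact ⟨α ++ α', γ, A, β, hP, by simp [hx], by simp [hy]⟩

lemma Derives.append_right {V T : Type} {G : CFG V T} {u v : List (GSym V T)}
    (γ : List (GSym V T)) (h : G.Derives u v) : G.Derives (u ++ γ) (v ++ γ) := by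
  induction h with
  | refl => exact Relation.ReflTransGen.refl
  | tail _ hs ih =>
    refine ih.tail ?_
    obtain ⟨α', γ', A, β, hP, hx, hy⟩ := hs
    exact ⟨α', γ' ++ γ, A, β, hP, by simp [hx], by simp [hy]⟩

lemma satstep_path {V T Q : Type} {G : CFG V T} {δ₁ δ₂ : Set (Q × GSym V T × Q)}
    (hs : SatStep G δ₁ δ₂) {p p' : Q} {w : List (GSym V T)}
    (hp : NPath δ₂ p w p') :
    ∃ w', NPath δ₁ p w' p' ∧ G.Derives w w' := by
  obtain ⟨A, β, q, q', hP, hβ, rfl⟩ := hs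
  induction hp with
  | nil r => exact ⟨[], NPath.nil r, Relation.ReflTransGen.refl⟩
  | @cons r r'' r' a v ht _ ih =>
    obtain ⟨v', hv', hdv⟩ := ih
    rcases ht with heq | hmem
    · rw [Prod.mk.injEq, Prod.mk.injEq] at heq
      obtain ⟨rfl, rfl, rfl⟩ := heq
      refine ⟨β ++ v', hβ.append hv', ?_⟩
      exact Relation.ReflTransGen.head ⟨[], v, A, β, hP, rfl, rfl⟩
        (Derives.append_left β hdv)
    · exact ⟨a :: v', NPath.cons hmem hv',
        (Derives.append_left [a] hdv : G.Derives ([a] ++ v) ([a] ++ v'))⟩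

theorem saturation_sound {V T Q : Type} (G : CFG V T)
    (δ δ' : Set (Q × GSym V T × Q)) (q₀ : Q) (F : Set Q)
    (h : Relation.ReflTransGen (SatStep G) δ δ') :
    NAccepts δ' q₀ F ⊆ G.preStar (NAccepts δ q₀ F) := by
  induction h with
  | refl => intro w hw; exact ⟨w, hw, Relation.ReflTransGen.refl⟩
  | tail _ hs ih =>
    intro w hw
    obtain ⟨qf, hqf, hp⟩ := hw
    obtain ⟨w', hp', hd⟩ := satstep_path hs hp
    obtain ⟨b, hb, hd'⟩ := ih ⟨qf, hqf, hp'⟩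
    exact ⟨b, hb, hd.trans hd'⟩
end

section
/- Book–Otto theorem: for any context-free grammar G = (V,T,P,S) and any regular language L ⊆ (V ∪ T)*, the set pre*(L) of predecessors of L under the derivation relation of G is regular. -/
/-- A language over `GSym V T` is regular if some DFA (with states `Fin n`) accepts it. -/
def IsRegularLang {V T : Type} (L : Set (List (GSym V T))) : Prop :=
  ∃ (n : ℕ) (M : DFA (GSym V T) (Fin n)), ∀ w, w ∈ M.accepts ↔ w ∈ L

/-! Let `M` be a DFA for `L`. Since derivations from a word `a₁ ⋯ aₖ` are exactly concatenations
of derivations from the single symbols `aᵢ`, a word lies in `pre*(L)` iff `M` can be driven to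
acceptance by reading, for each `aᵢ` in turn, some word derivable from `aᵢ`. This is an NFA on the
states of `M` whose step on `a` relates `q` to every state `M` reaches from `q` on a word
derivable from `a`; no saturation procedure is needed, since the state set is finite regardless
of how the transitions are found. -/

namespace CFG

variable {V T : Type} {G : CFG V T}

theorem DStep.append_left {x y : List (GSym V T)} (z : List (GSym V T)) (h : G.DStep x y) :
    G.DStep (z ++ x) (z ++ y) := by
  obtain ⟨α, γ, A, β, hP, rfl, rfl⟩ := h
  exact ⟨z ++ α, γ, A, β, hP, by simp, by simp⟩

theorem DStep.append_right {x y : List (GSym V T)} (z : List (GSym V T)) (h : G.DStep x y) :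
    G.DStep (x ++ z) (y ++ z) := by
  obtain ⟨α, γ, A, β, hP, rfl, rfl⟩ := h
  exact ⟨α, γ ++ z, A, β, hP, by simp, by simp⟩

theorem DStep.of_append {u v w : List (GSym V T)} (h : G.DStep (u ++ v) w) :
    (∃ u', G.DStep u u' ∧ w = u' ++ v) ∨ ∃ v', G.DStep v v' ∧ w = u ++ v' := by
  obtain ⟨α, γ, A, β, hP, huv, rfl⟩ := h
  rcases List.append_eq_append_iff.1 huv with ⟨δ, rfl, rfl⟩ | ⟨δ, rfl, hδ⟩
  · exact .inr ⟨δ ++ β ++ γ, ⟨δ, γ, A, β, hP, rfl, rfl⟩, by simp⟩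
  · rcases List.cons_eq_append_iff.1 hδ with ⟨rfl, rfl⟩ | ⟨δ', rfl, rfl⟩
    · exact .inr ⟨β ++ γ, ⟨[], γ, A, β, hP, rfl, rfl⟩, by simp⟩
    · exact .inl ⟨α ++ β ++ δ', ⟨α, δ', A, β, hP, rfl, rfl⟩, by simp⟩

theorem Derives.append {u u' v v' : List (GSym V T)} (hu : G.Derives u u') (hv : G.Derives v v') :
    G.Derives (u ++ v) (u' ++ v') :=
  (hu.lift (· ++ v) fun _ _ => DStep.append_right v).trans
    (hv.lift (u' ++ ·) fun _ _ => DStep.append_left u')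

theorem derives_append_iff {u v w : List (GSym V T)} :
    G.Derives (u ++ v) w ↔ ∃ u' v', G.Derives u u' ∧ G.Derives v v' ∧ w = u' ++ v' := by
  refine ⟨fun h => ?_, fun ⟨u', v', hu, hv, hw⟩ => hw ▸ hu.append hv⟩
  induction h with
  | refl => exact ⟨u, v, .refl, .refl, rfl⟩
  | tail _ hstep ih =>
    obtain ⟨u', v', hu, hv, rfl⟩ := ih
    rcases hstep.of_append with ⟨u'', hu'', rfl⟩ | ⟨v'', hv'', rfl⟩
    · exact ⟨u'', v', hu.tail hu'', hv, rfl⟩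
    · exact ⟨u', v'', hu, hv.tail hv'', rfl⟩

theorem derives_nil_iff {w : List (GSym V T)} : G.Derives [] w ↔ w = [] := by
  refine ⟨fun h => ?_, fun h => h ▸ .refl⟩
  rcases h.cases_head with rfl | ⟨_, ⟨α, γ, A, β, _, hnil, _⟩, _⟩
  · rfl
  · simp at hnil

variable (G) {σ : Type*}

def preStarNFA (M : DFA (GSym V T) σ) : NFA (GSym V T) σ where
  step q a := {q' | ∃ w, G.Derives [a] w ∧ M.evalFrom q w = q'}
  start := {M.start}
  accept := M.accept

theorem mem_evalFrom_preStarNFA (M : DFA (GSym V T) σ) (S : Set σ) (α : List (GSym V T))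
    (q' : σ) :
    q' ∈ (G.preStarNFA M).evalFrom S α ↔ ∃ q ∈ S, ∃ w, G.Derives α w ∧ M.evalFrom q w = q' := by
  induction α generalizing S with
  | nil => simp [derives_nil_iff]
  | cons a α ih =>
    rw [NFA.evalFrom_cons, ih, ← List.singleton_append]
    simp only [NFA.mem_stepSet, preStarNFA, Set.mem_ofPred_eq, derives_append_iff]
    constructor
    · rintro ⟨_, ⟨q, hq, u, hu, rfl⟩, v, hv, rfl⟩
      exact ⟨q, hq, u ++ v, ⟨u, v, hu, hv, rfl⟩, M.evalFrom_of_append q u v⟩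
    · rintro ⟨q, hq, _, ⟨u, v, hu, hv, rfl⟩, rfl⟩
      exact ⟨_, ⟨q, hq, u, hu, rfl⟩, v, hv, (M.evalFrom_of_append q u v).symm⟩

theorem accepts_preStarNFA (M : DFA (GSym V T) σ) :
    (G.preStarNFA M).accepts = G.preStar M.accepts := by
  ext α
  rw [NFA.mem_accepts]
  simp only [mem_evalFrom_preStarNFA]
  constructor
  · rintro ⟨_, hacc, _, rfl, w, hw, rfl⟩
    exact ⟨w, hacc, hw⟩
  · rintro ⟨w, hacc, hw⟩
    exact ⟨_, hacc, M.start, rfl, w, hw, rfl⟩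

end CFG

theorem Language.IsRegular.preStar {V T : Type} (G : CFG V T) {L : Language (GSym V T)}
    (hL : L.IsRegular) : Language.IsRegular (G.preStar L) := by
  classical
  obtain ⟨σ, _, M, rfl⟩ := hL
  exact ⟨Set σ, inferInstance, (G.preStarNFA M).toDFA,
    by rw [NFA.toDFA_correct, G.accepts_preStarNFA]⟩

theorem isRegularLang_iff {V T : Type} {L : Set (List (GSym V T))} :
    IsRegularLang L ↔ Language.IsRegular L := by
  constructor
  · rintro ⟨n, M, hM⟩
    exact ⟨Fin n, inferInstance, M, Set.ext hM⟩
  · rintro ⟨σ, _, M, rfl⟩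
    exact ⟨_, M.reindex (Fintype.equivFin σ), Set.ext_iff.1 (M.accepts_reindex _)⟩

theorem book_otto {V T : Type} (G : CFG V T) (L : Set (List (GSym V T)))
    (hL : IsRegularLang L) : IsRegularLang (G.preStar L) :=
  isRegularLang_iff.2 ((isRegularLang_iff.1 hL).preStar G)
end
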